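/- Let K^ν, K^τ, C_Σ > 0, ξ ∈ (1/2, 1], and b_max, κ_max ≥ 0 satisfy b_max² κ_max² < 4 K^τ C_Σ / K^ν. Then there exist η ∈ (0,1), ε₁ ∈ (0,1), and ε₂ ∈ (0, 2/(b_max κ_max)) (with ε₂ arbitrary positive if b_max κ_max = 0) such that [(2η K^τ C_Σ (2ξ−1) + 8K^ν)ε₁ − 8K^ν]ε₂ ≥ b_max κ_max (2ξ−1) K^ν ε₁. -/
import Mathlib


set_option maxHeartbeats 1000000 in
/-- The algebraic heart of the coercivity proof of Theorem 4.3: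
given the curvature smallness condition b_max² κ_max² < 4 K^τ C_Σ / K^ν with
ξ ∈ (1/2,1], there exist η ∈ (0,1), ε₁ ∈ (0,1) and ε₂ ∈ (0, 2/(b_max κ_max))
(ε₂ arbitrary positive when b_max κ_max = 0) such that
[(2η K^τ C_Σ (2ξ−1) + 8K^ν)ε₁ − 8K^ν]ε₂ ≥ b_max κ_max (2ξ−1) K^ν ε₁. -/
theorem stmt_11 (Kv Kt CS ξ b_max κ_max : ℝ)
    (hKv : 0 < Kv) (hKt : 0 < Kt) (hCS : 0 < CS)
    (hξ : ξ ∈ Set.Ioc (1 / 2 : ℝ) 1)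
    (hb : 0 ≤ b_max) (hκ : 0 ≤ κ_max)
    (hsmall : b_max ^ 2 * κ_max ^ 2 < 4 * Kt * CS / Kv) :
    ∃ η ∈ Set.Ioo (0 : ℝ) 1, ∃ ε₁ ∈ Set.Ioo (0 : ℝ) 1, ∃ ε₂ : ℝ,
      0 < ε₂ ∧
      (0 < b_max * κ_max → ε₂ < 2 / (b_max * κ_max)) ∧
      b_max * κ_max * (2 * ξ - 1) * Kv * ε₁ ≤
        ((2 * η * Kt * CS * (2 * ξ - 1) + 8 * Kv) * ε₁ - 8 * Kv) * ε₂ := by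
  obtain ⟨hξ1, hξ2⟩ := hξ
  set s : ℝ := 2 * ξ - 1 with hsdef
  have hs0 : 0 < s := by simp only [hsdef]; linarith
  set B : ℝ := b_max * κ_max with hBdef
  have hB0 : 0 ≤ B := mul_nonneg hb hκ
  have h4 : (0 : ℝ) < 4 * Kt * CS := by positivity
  have hsmall' : B ^ 2 * Kv < 4 * Kt * CS := by
    have h := (lt_div_iff₀ hKv).mp hsmall
    have : B ^ 2 = b_max ^ 2 * κ_max ^ 2 := by ring
    linarith [this ▸ h]
  -- choose η
  set q : ℝ := B ^ 2 * Kv / (4 * Kt * CS) with hqdef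
  have hq0 : 0 ≤ q := by positivity
  have hq1 : q < 1 := (div_lt_one h4).mpr hsmall'
  set η : ℝ := (q + 1) / 2 with hηdef
  have hη0 : 0 < η := by simp only [hηdef]; linarith
  have hη1 : η < 1 := by simp only [hηdef]; linarith
  have hηq : q < η := by simp only [hηdef]; linarith
  have hkey : B ^ 2 * Kv < 4 * η * Kt * CS := by
    have := (div_lt_iff₀ h4).mp hηq
    linarith
  -- choose ε₁
  set D : ℝ := 2 * η * Kt * CS * s + 8 * Kv with hDdef
  have hD0 : 0 < D := by positivity
  have hdenom : 16 * Kv < 2 * D - B ^ 2 * s * Kv := by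
    have : 2 * D - B ^ 2 * s * Kv = s * (4 * η * Kt * CS - B ^ 2 * Kv) + 16 * Kv := by
      simp only [hDdef]; ring
    nlinarith
  have hdpos : (0 : ℝ) < 2 * D - B ^ 2 * s * Kv := by linarith [hKv]
  set c₁ : ℝ := 16 * Kv / (2 * D - B ^ 2 * s * Kv) with hc₁def
  have hc₁0 : 0 < c₁ := by positivity
  have hc₁1 : c₁ < 1 := (div_lt_one hdpos).mpr hdenom
  set ε₁ : ℝ := (c₁ + 1) / 2 with hε₁def
  have hε₁0 : 0 < ε₁ := by simp only [hε₁def]; linarith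
  have hε₁1 : ε₁ < 1 := by simp only [hε₁def]; linarith
  have hε₁c : c₁ < ε₁ := by simp only [hε₁def]; linarith
  have hmain : 16 * Kv < ε₁ * (2 * D - B ^ 2 * s * Kv) := by
    have := (div_lt_iff₀ hdpos).mp hε₁c
    linarith
  -- hence 2*(D*ε₁ - 8*Kv) > B^2 * s * Kv * ε₁ ≥ 0
  have hpos : 0 < D * ε₁ - 8 * Kv := by
    nlinarith [mul_nonneg (mul_nonneg (mul_nonneg (sq_nonneg B) hs0.le) hKv.le) hε₁0.le]
  clear_value s B q η D c₁ ε₁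
  refine ⟨η, ⟨hη0, hη1⟩, ε₁, ⟨hε₁0, hε₁1⟩, ?_⟩
  rcases eq_or_lt_of_le hB0 with hB | hB
  · -- B = 0 : take ε₂ = 1
    refine ⟨1, one_pos, fun h => absurd h (by rw [← hB]; simp), ?_⟩
    rw [← hDdef, ← hB]
    nlinarith [hpos]
  · -- B > 0 : take ε₂ = B * s * Kv * ε₁ / (D * ε₁ - 8 * Kv)
    refine ⟨B * s * Kv * ε₁ / (D * ε₁ - 8 * Kv), by positivity, ?_, ?_⟩
    · intro _
      rw [div_lt_div_iff₀ hpos hB]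
      nlinarith [hmain]
    · rw [← hDdef, mul_comm (D * ε₁ - 8 * Kv), div_mul_cancel₀ _ (ne_of_gt hpos)]
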